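/- Let D be a finite nonempty set, v : D → ℝ, and let μ be the standard Gumbel measure on ℝ. Then the expected maximum under the product Gumbel measure satisfies ∫ max_{d ∈ D} (v(d) + ε(d)) d(⊗_{d∈D} μ)(ε) = log(Σ_{d ∈ D} exp(v(d))) + γ, where γ is the Euler–Mascheroni constant. -/

import Mathlib

open MeasureTheory

/-- The standard Gumbel (Type-I extreme value) measure on ℝ: the measure with
density `x ↦ exp (-x - exp (-x))` with respect to Lebesgue measure. -/
noncomputable def gumbelMeasure : Measure ℝ :=
  MeasureTheory.volume.withDensity
    (fun x => ENNReal.ofReal (Real.exp (-x - Real.exp (-x))))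

/-!
The maximum of the shifted Gumbel variables `v d + ε d` is again Gumbel, shifted by
`log ∑ d, exp (v d)`: its distribution function is
`∏ d, exp (-exp (v d - t)) = exp (-exp (log (∑ d, exp (v d)) - t))`.
The Gumbel law is that of `-log T` for a standard exponential `T` (substitute `t = exp (-x)`),
so its mean is `-∫₀^∞ log t e^{-t} dt = -Γ'(1) = γ`.
-/

open Real Set
open scoped ENNReal

section ExpNegSubstitution

variable {E : Type*} [NormedAddCommGroup E] [NormedSpace ℝ E] {s : Set ℝ}

lemma hasDerivAt_exp_neg (x : ℝ) : HasDerivAt (fun y => exp (-y)) (-exp (-x)) x := by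
  simpa using (hasDerivAt_neg x).exp

lemma injective_exp_neg : Function.Injective fun x : ℝ => exp (-x) :=
  exp_injective.comp neg_injective

lemma image_exp_neg_Iic (a : ℝ) : (fun x => exp (-x)) '' Iic a = Ici (exp (-a)) := by
  rw [← image_image (g := exp) (f := Neg.neg), image_neg_Iic, image_exp_Ici]

lemma image_exp_neg_univ : (fun x => exp (-x)) '' univ = Ioi 0 := by
  rw [← image_image (g := exp) (f := Neg.neg), image_univ_of_surjective neg_surjective,
    image_univ, range_exp]

theorem lintegral_image_exp_neg (hs : MeasurableSet s) (g : ℝ → ℝ≥0∞) :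
    ∫⁻ t in (fun x => exp (-x)) '' s, g t =
      ∫⁻ x in s, ENNReal.ofReal (exp (-x)) * g (exp (-x)) := by
  simpa using lintegral_image_eq_lintegral_abs_deriv_mul hs
    (fun x _ => (hasDerivAt_exp_neg x).hasDerivWithinAt) injective_exp_neg.injOn g

theorem integral_image_exp_neg (hs : MeasurableSet s) (g : ℝ → E) :
    ∫ t in (fun x => exp (-x)) '' s, g t = ∫ x in s, exp (-x) • g (exp (-x)) := by
  simpa using integral_image_eq_integral_abs_deriv_smul hs
    (fun x _ => (hasDerivAt_exp_neg x).hasDerivWithinAt) injective_exp_neg.injOn g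

theorem integrableOn_image_exp_neg_iff (hs : MeasurableSet s) (g : ℝ → E) :
    IntegrableOn g ((fun x => exp (-x)) '' s) ↔
      IntegrableOn (fun x => exp (-x) • g (exp (-x))) s := by
  simpa using integrableOn_image_iff_integrableOn_abs_deriv_smul hs
    (fun x _ => (hasDerivAt_exp_neg x).hasDerivWithinAt) injective_exp_neg.injOn g

end ExpNegSubstitution

theorem lintegral_exp_neg_Ioi (c : ℝ) :
    ∫⁻ t in Ioi c, ENNReal.ofReal (exp (-t)) = ENNReal.ofReal (exp (-c)) := by
  have hint : IntegrableOn (fun t => exp (-t)) (Ioi c) := by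
    simpa using exp_neg_integrableOn_Ioi c one_pos
  rw [← integral_exp_neg_Ioi, ofReal_integral_eq_lintegral_ofReal hint
    (ae_of_all _ fun t => (exp_pos _).le)]

theorem integral_log_mul_exp_neg : ∫ t in Ioi 0, log t * exp (-t) = -eulerMascheroniConstant := by
  have hGammaIntegral := Complex.hasDerivAt_GammaIntegral (s := 1) (by simp)
  have hGamma := hGammaIntegral.congr_of_eventuallyEq <| by
    filter_upwards [(isOpen_lt continuous_const Complex.continuous_re).mem_nhds
      (show (0 : ℝ) < (1 : ℂ).re by simp)] with s hs
    exact Complex.Gamma_eq_integral hs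
  have := hGamma.unique Complex.hasDerivAt_Gamma_one
  simp only [sub_self, Complex.cpow_zero, one_mul] at this
  exact_mod_cast this

theorem integrableOn_log_mul_exp_neg : IntegrableOn (fun t => log t * exp (-t)) (Ioi 0) :=
  Integrable.of_integral_ne_zero <| by
    rw [integral_log_mul_exp_neg, neg_ne_zero]
    exact (one_half_pos.trans one_half_lt_eulerMascheroniConstant).ne'

lemma exp_neg_sub_exp_neg (x : ℝ) : exp (-x - exp (-x)) = exp (-x) * exp (-exp (-x)) := by
  rw [sub_eq_add_neg, exp_add]

theorem gumbelMeasure_apply {s : Set ℝ} (hs : MeasurableSet s) :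
    gumbelMeasure s = ∫⁻ t in (fun x => exp (-x)) '' s, ENNReal.ofReal (exp (-t)) := by
  simp_rw [lintegral_image_exp_neg hs, ← ENNReal.ofReal_mul (exp_pos _).le,
    ← exp_neg_sub_exp_neg]
  exact withDensity_apply _ hs

theorem gumbelMeasure_Iic (a : ℝ) :
    gumbelMeasure (Iic a) = ENNReal.ofReal (exp (-exp (-a))) := by
  rw [gumbelMeasure_apply measurableSet_Iic, image_exp_neg_Iic,
    setLIntegral_congr Ioi_ae_eq_Ici.symm, lintegral_exp_neg_Ioi]

instance : IsProbabilityMeasure gumbelMeasure where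
  measure_univ := by
    rw [gumbelMeasure_apply MeasurableSet.univ, image_exp_neg_univ, lintegral_exp_neg_Ioi]
    simp

section GumbelIntegral

variable {E : Type*} [NormedAddCommGroup E] [NormedSpace ℝ E]

lemma toReal_gumbelDensity_smul (f : ℝ → E) (x : ℝ) :
    (ENNReal.ofReal (exp (-x - exp (-x)))).toReal • f x =
      exp (-x) • (exp (-exp (-x)) • f (-log (exp (-x)))) := by
  rw [ENNReal.toReal_ofReal (exp_pos _).le, log_exp, neg_neg, exp_neg_sub_exp_neg, mul_smul]

theorem integral_gumbelMeasure (f : ℝ → E) :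
    ∫ x, f x ∂gumbelMeasure = ∫ t in Ioi 0, exp (-t) • f (-log t) := by
  rw [gumbelMeasure, integral_withDensity_eq_integral_toReal_smul (by fun_prop)
    (ae_of_all _ fun _ => ENNReal.ofReal_lt_top), ← image_exp_neg_univ,
    integral_image_exp_neg MeasurableSet.univ, setIntegral_univ]
  simp_rw [toReal_gumbelDensity_smul]

theorem integrable_gumbelMeasure_iff (f : ℝ → E) :
    Integrable f gumbelMeasure ↔ IntegrableOn (fun t => exp (-t) • f (-log t)) (Ioi 0) := by
  rw [gumbelMeasure, integrable_withDensity_iff_integrable_smul' (by fun_prop)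
    (ae_of_all _ fun _ => ENNReal.ofReal_lt_top), ← image_exp_neg_univ,
    integrableOn_image_exp_neg_iff MeasurableSet.univ, integrableOn_univ]
  simp_rw [toReal_gumbelDensity_smul]

end GumbelIntegral

theorem integral_id_gumbelMeasure : ∫ x, x ∂gumbelMeasure = eulerMascheroniConstant := by
  simp [integral_gumbelMeasure, mul_comm (exp _), integral_neg, integral_log_mul_exp_neg]

theorem integrable_id_gumbelMeasure : Integrable (fun x => x) gumbelMeasure := by
  rw [integrable_gumbelMeasure_iff]
  simpa [mul_comm (exp _)] using integrableOn_log_mul_exp_neg.neg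

section MaxStability

variable {D : Type*} [Fintype D] [Nonempty D]

lemma measurable_sup'_add (v : D → ℝ) :
    Measurable fun ε : D → ℝ => Finset.univ.sup' Finset.univ_nonempty fun d => v d + ε d := by
  fun_prop

lemma preimage_sup'_add_Iic (v : D → ℝ) (t : ℝ) :
    (fun ε : D → ℝ => Finset.univ.sup' Finset.univ_nonempty fun d => v d + ε d) ⁻¹' Iic t =
      univ.pi fun d => Iic (t - v d) := by
  ext ε
  simp only [mem_preimage, mem_Iic, Finset.sup'_le_iff, Finset.mem_univ, true_implies, Set.mem_pi,
    mem_univ, le_sub_iff_add_le']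

lemma exp_neg_sub_log_sum_exp (v : D → ℝ) (t : ℝ) :
    exp (-(t - log (∑ d, exp (v d)))) = ∑ d, exp (-(t - v d)) := by
  rw [neg_sub, exp_sub, exp_log (Finset.sum_pos (fun d _ => exp_pos _) Finset.univ_nonempty),
    Finset.sum_div]
  simp_rw [neg_sub, exp_sub]

theorem map_sup'_add_pi_gumbelMeasure (v : D → ℝ) :
    (Measure.pi fun _ : D => gumbelMeasure).map
        (fun ε => Finset.univ.sup' Finset.univ_nonempty fun d => v d + ε d) =
      gumbelMeasure.map (· + log (∑ d, exp (v d))) := by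
  have : IsProbabilityMeasure ((Measure.pi fun _ : D => gumbelMeasure).map
      (fun ε => Finset.univ.sup' Finset.univ_nonempty fun d => v d + ε d)) :=
    Measure.isProbabilityMeasure_map (measurable_sup'_add v).aemeasurable
  refine Measure.ext_of_Iic _ _ fun t => ?_
  rw [Measure.map_apply (measurable_sup'_add v) measurableSet_Iic, preimage_sup'_add_Iic,
    Measure.pi_pi, Measure.map_apply (by fun_prop) measurableSet_Iic, preimage_add_const_Iic,
    gumbelMeasure_Iic, exp_neg_sub_log_sum_exp]
  simp_rw [gumbelMeasure_Iic]
  rw [← ENNReal.ofReal_prod_of_nonneg (fun d _ => (exp_pos _).le), ← exp_sum,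
    Finset.sum_neg_distrib]

end MaxStability

/-- The expected maximum of `v d + ε d` over a finite nonempty set of alternatives,
where the `ε d` are i.i.d. standard Gumbel, equals the log-sum-exp of `v` plus the
Euler–Mascheroni constant. -/
theorem integral_max_gumbel {D : Type*} [Fintype D] [Nonempty D] (v : D → ℝ) :
    (∫ ε : D → ℝ, (Finset.univ.sup' Finset.univ_nonempty fun d => v d + ε d)
        ∂(Measure.pi fun _ : D => gumbelMeasure))
      = Real.log (∑ d : D, Real.exp (v d)) + Real.eulerMascheroniConstant := by
  rw [← integral_map (f := fun x => x) (measurable_sup'_add v).aemeasurable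
      aestronglyMeasurable_id, map_sup'_add_pi_gumbelMeasure,
    integral_map (f := fun x => x) (by fun_prop) aestronglyMeasurable_id,
    integral_add integrable_id_gumbelMeasure (integrable_const _), integral_id_gumbelMeasure]
  simp [add_comm]
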